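/- Let G be a linearly ordered abelian group, n ∈ ℕ, and C ⊆ G a convex subgroup. Then ⋂{H + nG : H a convex subgroup of G with H ⊋ C} = ⋂{H_{n,a} + nG : a ∈ G, H_{n,a} ⊋ C}, where intersections over empty families are G. In other words, G^{[n]}_C = ⋂{H_{n,a} + nG : a ∈ G, H_{n,a} ⊋ C}. -/

import Mathlib

open Pointwise

/-- The set `nG = {n·g : g ∈ G}`. -/
def NG (G : Type*) [AddCommGroup G] (n : ℕ) : Set G :=
  {x : G | ∃ g : G, n • g = x}

/-- `H` is a convex subgroup of the linearly ordered abelian group `G`. -/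
def IsConvexSubgroup {G : Type*} [AddCommGroup G] [LinearOrder G] [IsOrderedAddMonoid G] (H : Set G) : Prop :=
  (0 : G) ∈ H ∧ (∀ x ∈ H, ∀ y ∈ H, x + y ∈ H) ∧ (∀ x ∈ H, -x ∈ H) ∧
    ∀ a ∈ H, ∀ b : G, 0 ≤ b → b ≤ a → b ∈ H

/-- `H_{n,a}`: the largest convex subgroup `H` with `a ∉ H + nG` (it is the union of
all such subgroups), and `{0}` if `a ∈ nG` (in which case the union is empty). -/
def Hna {G : Type*} [AddCommGroup G] [LinearOrder G] [IsOrderedAddMonoid G] (n : ℕ) (a : G) : Set G :=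
  {0} ∪ ⋃₀ {H : Set G | IsConvexSubgroup H ∧ a ∉ H + NG G n}

/-- `H'_{n,b} = ⋃ {H_{n,a} : a ∈ G, b ∉ H_{n,a}}`, with `{0}` for the empty union. -/
def Hnb' {G : Type*} [AddCommGroup G] [LinearOrder G] [IsOrderedAddMonoid G] (n : ℕ) (b : G) : Set G :=
  {0} ∪ ⋃₀ {H : Set G | ∃ a : G, H = Hna n a ∧ b ∉ Hna n a}

/-- `G^{[n]}_C = ⋂ {H + nG : H convex subgroup, H ⊋ C}`, with `G` for the empty
intersection. -/
def Gbr {G : Type*} [AddCommGroup G] [LinearOrder G] [IsOrderedAddMonoid G] (C : Set G) (n : ℕ) : Set G :=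
  ⋂₀ {S : Set G | ∃ H : Set G, IsConvexSubgroup H ∧ C ⊂ H ∧ S = H + NG G n}

/-!
If `x ∉ H + nG` for a convex subgroup `H ⊋ C`, then `H ⊆ H_{n,x}`, so `H_{n,x} ⊋ C`; but `x` never
lies in `H_{n,x} + nG`, since `H_{n,x}` is a union of convex subgroups avoiding `x` modulo `nG`
(this union is a convex subgroup because convex subgroups form a chain). Hence the intersection over
the subfamily `{H_{n,a}}` is no larger than `G^{[n]}_C`.
-/

namespace IsConvexSubgroup

variable {G : Type*} [AddCommGroup G] [LinearOrder G] [IsOrderedAddMonoid G] {H K : Set G}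

theorem abs_mem_iff (hH : IsConvexSubgroup H) {x : G} : |x| ∈ H ↔ x ∈ H := by
  rcases abs_choice x with hx | hx
  · rw [hx]
  · rw [hx]
    exact ⟨fun h => neg_neg x ▸ hH.2.2.1 _ h, hH.2.2.1 x⟩

theorem mem_of_abs_le (hH : IsConvexSubgroup H) {x y : G} (hy : y ∈ H) (hxy : |x| ≤ |y|) :
    x ∈ H :=
  hH.abs_mem_iff.mp (hH.2.2.2 _ (hH.abs_mem_iff.mpr hy) _ (abs_nonneg x) hxy)

theorem subset_or_subset (hH : IsConvexSubgroup H) (hK : IsConvexSubgroup K) :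
    H ⊆ K ∨ K ⊆ H := by
  by_contra! hHK
  obtain ⟨⟨h, hhH, hhK⟩, ⟨k, hkK, hkH⟩⟩ := And.imp Set.not_subset.mp Set.not_subset.mp hHK
  rcases le_total |h| |k| with hle | hle
  · exact hhK (hK.mem_of_abs_le hkK hle)
  · exact hkH (hH.mem_of_abs_le hhH hle)

end IsConvexSubgroup

section

variable {G : Type*} [AddCommGroup G] [LinearOrder G] [IsOrderedAddMonoid G]

theorem isConvexSubgroup_zero : IsConvexSubgroup ({0} : Set G) := by
  refine ⟨rfl, ?_, ?_, ?_⟩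
  · rintro x rfl y rfl
    exact add_zero 0
  · rintro x rfl
    exact neg_zero
  · rintro a rfl b hb0 hba
    exact le_antisymm hba hb0

theorem isConvexSubgroup_sUnion {S : Set (Set G)} (hS : S.Nonempty)
    (hconv : ∀ H ∈ S, IsConvexSubgroup H) : IsConvexSubgroup (⋃₀ S) := by
  refine ⟨?_, ?_, ?_, ?_⟩
  · obtain ⟨H, hH⟩ := hS
    exact ⟨H, hH, (hconv H hH).1⟩
  · rintro x ⟨H, hH, hx⟩ y ⟨K, hK, hy⟩
    rcases (hconv H hH).subset_or_subset (hconv K hK) with hHK | hKH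
    · exact ⟨K, hK, (hconv K hK).2.1 x (hHK hx) y hy⟩
    · exact ⟨H, hH, (hconv H hH).2.1 x hx y (hKH hy)⟩
  · rintro x ⟨H, hH, hx⟩
    exact ⟨H, hH, (hconv H hH).2.2.1 x hx⟩
  · rintro a ⟨H, hH, ha⟩ b hb0 hba
    exact ⟨H, hH, (hconv H hH).2.2.2 a ha b hb0 hba⟩

theorem Hna_isConvexSubgroup (n : ℕ) (a : G) : IsConvexSubgroup (Hna n a) := by
  rw [Hna, ← Set.sUnion_insert]
  refine isConvexSubgroup_sUnion (Set.insert_nonempty _ _) ?_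
  rintro H (rfl | hH)
  exacts [isConvexSubgroup_zero, hH.1]

theorem IsConvexSubgroup.subset_Hna {H : Set G} (hH : IsConvexSubgroup H) {n : ℕ} {a : G}
    (ha : a ∉ H + NG G n) : H ⊆ Hna n a :=
  fun _ hh => Or.inr ⟨H, ⟨hH, ha⟩, hh⟩

theorem self_notMem_Hna_add_NG {n : ℕ} {a : G} (ha : a ∉ NG G n) : a ∉ Hna n a + NG G n := by
  intro hmem
  obtain ⟨h, hh, g, hg, hsum⟩ := Set.mem_add.mp hmem
  rcases hh with rfl | ⟨H, ⟨-, haH⟩, hh⟩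
  · rw [zero_add] at hsum
    exact ha (hsum ▸ hg)
  · exact haH ⟨h, hh, g, hg, hsum⟩

end

theorem Gbr_eq_sInter_Hna_add_general {G : Type*} [AddCommGroup G] [LinearOrder G] [IsOrderedAddMonoid G]
    (n : ℕ) (C : Set G) :
    Gbr C n = ⋂₀ {S : Set G | ∃ a : G, C ⊂ Hna n a ∧ S = Hna n a + NG G n} := by
  refine subset_antisymm ?_ ?_
  · refine Set.sInter_subset_sInter ?_
    rintro S ⟨a, hCa, rfl⟩
    exact ⟨Hna n a, Hna_isConvexSubgroup n a, hCa, rfl⟩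
  · rintro x hx S ⟨H, hH, hCH, rfl⟩
    by_contra hxH
    have hxNG : x ∉ NG G n := fun hg => hxH ⟨0, hH.1, x, hg, zero_add x⟩
    have hCx : C ⊂ Hna n x := hCH.trans_subset (hH.subset_Hna hxH)
    exact self_notMem_Hna_add_NG hxNG (hx _ ⟨x, hCx, rfl⟩)

/-- For a convex subgroup `C` and positive `n`:
`G^{[n]}_C = ⋂ {H_{n,a} + nG : a ∈ G, H_{n,a} ⊋ C}`, where intersections over empty
families are all of `G` (`Set.univ`). -/
theorem Gbr_eq_sInter_Hna_add {G : Type*} [AddCommGroup G] [LinearOrder G] [IsOrderedAddMonoid G]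
    (n : ℕ) (hn : 0 < n) (C : Set G) (hC : IsConvexSubgroup C) :
    Gbr C n = ⋂₀ {S : Set G | ∃ a : G, C ⊂ Hna n a ∧ S = Hna n a + NG G n} :=
  Gbr_eq_sInter_Hna_add_general n C
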